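/- arXiv:2402.10718 — 4 statements merged into one kernel-verified Lean document; each statement's English description precedes it below -/
import Mathlib

section
/- The set of matrices $A \in \mathbb{C}^{p\times p}$ at which a power series $\sum_{n=0}^\infty A^n F_n$ with $\limsup_n \|F_n\|^{1/n} = \infty$ converges has empty interior in $\mathbb{C}^{p\times p}$. -/
/-!
Invertible matrices are dense, since `A - z • 1` is invertible for all `z` outside the finite
spectrum of `A`. So a nonempty open set of convergence would contain an invertible `A`. There the
terms `Aⁿ Fₙ` tend to zero, hence are bounded by some `M`, and `Fₙ = (A⁻¹)ⁿ (Aⁿ Fₙ)` gives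
`‖Fₙ‖ ≤ ‖A⁻¹‖ⁿ M`, so `limsup ‖Fₙ‖^{1/n} ≤ ‖A⁻¹‖ · max M 1 < ∞`.
-/

open scoped ENNReal

attribute [local instance] Matrix.linftyOpNormedRing Matrix.linftyOpNormedAlgebra

open Filter Topology

theorem tendsto_atTop_zero_of_tendsto_sum_range {G : Type*} [AddCommGroup G]
    [TopologicalSpace G] [IsTopologicalAddGroup G] {f : ℕ → G} {L : G}
    (h : Tendsto (fun N ↦ ∑ n ∈ Finset.range N, f n) atTop (𝓝 L)) :
    Tendsto f atTop (𝓝 0) := by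
  have hdiff := (h.comp (tendsto_add_atTop_nat 1)).sub h
  simpa only [Function.comp_def, Finset.sum_range_succ, add_sub_cancel_left, sub_self] using hdiff

theorem dense_setOf_isUnit_of_finite_spectrum (𝕜 : Type*) {A : Type*}
    [NontriviallyNormedField 𝕜] [Ring A] [TopologicalSpace A] [IsTopologicalRing A]
    [Algebra 𝕜 A] [ContinuousSMul 𝕜 A] (h : ∀ a : A, (spectrum 𝕜 a).Finite) :
    Dense {a : A | IsUnit a} := by
  intro a
  have hlim : Tendsto (fun z : 𝕜 ↦ a - algebraMap 𝕜 A z) (𝓝[≠] 0) (𝓝 a) := by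
    have : Continuous fun z : 𝕜 ↦ a - algebraMap 𝕜 A z :=
      continuous_const.sub (continuous_algebraMap 𝕜 A)
    simpa using (this.tendsto 0).mono_left nhdsWithin_le_nhds
  refine mem_closure_of_tendsto hlim ?_
  have hnot : ∀ᶠ z in 𝓝[≠] (0 : 𝕜), z ∉ spectrum 𝕜 a := by
    have : (spectrum 𝕜 a \ {0})ᶜ ∈ 𝓝 (0 : 𝕜) :=
      ((h a).sdiff (t := {0})).isClosed.compl_mem_nhds (by simp)
    filter_upwards [mem_nhdsWithin_of_mem_nhds this, self_mem_nhdsWithin] with z hz hz0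
    exact fun hmem ↦ hz ⟨hmem, hz0⟩
  filter_upwards [hnot] with z hz
  show IsUnit _
  rw [← neg_sub]
  exact (spectrum.notMem_iff.mp hz).neg

theorem ENNReal.limsup_rpow_one_div_ne_top_of_le_geometric {f : ℕ → ℝ≥0∞} {C K : ℝ≥0∞}
    (hC : C ≠ ⊤) (hK : K ≠ ⊤) (h : ∀ᶠ n in atTop, f n ≤ C ^ n * K) :
    limsup (fun n ↦ f n ^ (1 / (n : ℝ))) atTop ≠ ⊤ := by
  set K' := max K 1
  have hroot : ∀ᶠ n : ℕ in atTop, f n ^ (1 / (n : ℝ)) ≤ C * K' := by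
    filter_upwards [h, eventually_ne_atTop 0] with n hn hn0
    have hexp : 0 ≤ 1 / (n : ℝ) := by positivity
    calc f n ^ (1 / (n : ℝ)) ≤ (C ^ n * K') ^ (1 / (n : ℝ)) := by
          gcongr; exact hn.trans (by gcongr; exact le_max_left _ _)
      _ = C * K' ^ (1 / (n : ℝ)) := by
          rw [ENNReal.mul_rpow_of_nonneg _ _ hexp, one_div, ENNReal.pow_rpow_inv_natCast hn0]
      _ ≤ C * K' := by
          gcongr
          calc K' ^ (1 / (n : ℝ)) ≤ K' ^ (1 : ℝ) :=
                ENNReal.rpow_le_rpow_of_exponent_le (le_max_right _ _) <|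
                  div_le_one_of_le₀ (by exact_mod_cast Nat.one_le_iff_ne_zero.2 hn0) (by positivity)
            _ = K' := ENNReal.rpow_one K'
  refine ne_top_of_le_ne_top ?_ (limsup_le_of_le (by isBoundedDefault) hroot)
  exact ENNReal.mul_ne_top hC (max_ne_top hK ENNReal.one_ne_top)

theorem limsup_nnnorm_rpow_one_div_ne_top_of_isUnit {R : Type*} [NormedRing R] {A : R}
    (hA : IsUnit A) {F : ℕ → R} (hbdd : BddAbove (Set.range fun n ↦ ‖A ^ n * F n‖₊)) :
    limsup (fun n ↦ (‖F n‖₊ : ℝ≥0∞) ^ (1 / (n : ℝ))) atTop ≠ ⊤ := by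
  obtain ⟨u, rfl⟩ := hA
  obtain ⟨M, hM⟩ := hbdd
  refine ENNReal.limsup_rpow_one_div_ne_top_of_le_geometric (C := ‖(↑u⁻¹ : R)‖₊) (K := M)
    ENNReal.coe_ne_top ENNReal.coe_ne_top ?_
  filter_upwards [eventually_gt_atTop 0] with n hn
  have hFn : F n = (↑u⁻¹ : R) ^ n * (↑u ^ n * F n) := by
    rw [← Units.val_pow_eq_pow_val, ← Units.val_pow_eq_pow_val, inv_pow,
      Units.inv_mul_cancel_left]
  rw [← ENNReal.coe_pow, ← ENNReal.coe_mul, ENNReal.coe_le_coe, hFn]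
  calc ‖(↑u⁻¹ : R) ^ n * (↑u ^ n * F n)‖₊ ≤ ‖(↑u⁻¹ : R) ^ n‖₊ * ‖↑u ^ n * F n‖₊ :=
        nnnorm_mul_le _ _
    _ ≤ ‖(↑u⁻¹ : R)‖₊ ^ n * M := by
        gcongr
        · exact nnnorm_pow_le' _ hn
        · exact hM ⟨n, rfl⟩

/-- If `limsup ‖Fₙ‖^{1/n} = ∞`, the set of matrices `A` at which `∑ Aⁿ Fₙ` converges
has empty interior. -/
theorem stmt2 {p : ℕ}
    (F : ℕ → Matrix (Fin p) (Fin p) ℂ)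
    (hF : Filter.limsup (fun n => (‖F n‖₊ : ℝ≥0∞) ^ (1 / (n : ℝ))) Filter.atTop = ⊤) :
    interior {A : Matrix (Fin p) (Fin p) ℂ |
      ∃ L : Matrix (Fin p) (Fin p) ℂ,
        Filter.Tendsto (fun N => ∑ n ∈ Finset.range N, A ^ n * F n)
          Filter.atTop (nhds L)} = ∅ := by
  by_contra hne
  obtain ⟨A, hA_conv, hA_unit⟩ :=
    (dense_setOf_isUnit_of_finite_spectrum ℂ Matrix.finite_spectrum).inter_open_nonempty _
      isOpen_interior (Set.nonempty_iff_ne_empty.2 hne)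
  obtain ⟨L, hL⟩ := interior_subset hA_conv
  exact limsup_nnnorm_rpow_one_div_ne_top_of_isUnit hA_unit
    (tendsto_atTop_zero_of_tendsto_sum_range hL).nnnorm.bddAbove_range hF
end

section
/- Let $F(Z) = \sum_{n=0}^\infty Z^n F_n$ be a matrix power series with $\limsup_n \|F_n\|^{1/n} \le 1/R$, and let $G$ be another matrix power series with radius $\ge R$. Then for any $A \in \mathbb{C}^{p\times p}$ with $\rho(A) < R$, the Cauchy product satisfies $(F\star G)(A) = \sum_{n=0}^\infty A^n F(A) G_n$. In particular, if $F(A) = 0$ then $(F\star G)(A) = 0$. -/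
/-!
By Gelfand's formula, `ρ(A) < R` gives `‖Aⁿ‖ ≤ rⁿ` eventually for some `r < R`, while the root
bounds give `‖Fₙ‖, ‖Gₙ‖ ≤ (1/s)ⁿ` eventually for some `s ∈ (r, R)`. Hence the double family
`Aˡ (Aᵏ Fₖ) Gₗ` is absolutely summable: summed along the antidiagonals `k + l = n` it is
`(F ⋆ G)(A)`, summed over `k` first it is `∑ₗ Aˡ F(A) Gₗ`.
-/

open scoped ENNReal

attribute [local instance] Matrix.linftyOpNormedRing Matrix.linftyOpNormedAlgebra

open Filter Finset

theorem eventually_norm_le_pow_of_limsup_lt {E : Type*} [SeminormedAddCommGroup E]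
    {f : ℕ → E} {t : ℝ}
    (h : limsup (fun n ↦ (‖f n‖₊ : ℝ≥0∞) ^ (1 / (n : ℝ))) atTop < ENNReal.ofReal t) :
    ∀ᶠ n in atTop, ‖f n‖ ≤ t ^ n := by
  filter_upwards [eventually_lt_of_limsup_lt h, eventually_gt_atTop 0] with n hn hn0
  rw [one_div, ENNReal.rpow_inv_lt_iff (by positivity), ENNReal.rpow_natCast] at hn
  have ht : 0 ≤ t := by
    by_contra! ht
    simp [ENNReal.ofReal_of_nonpos ht.le, hn0.ne'] at hn
  rw [← ENNReal.ofReal_pow ht, ← enorm_eq_nnnorm, ← ofReal_norm,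
    ENNReal.ofReal_lt_ofReal_iff'] at hn
  exact hn.1.le

theorem summable_norm_pow_mul_norm_of_spectralRadius_lt {𝔸 E : Type*} [NormedRing 𝔸]
    [NormedAlgebra ℂ 𝔸] [CompleteSpace 𝔸] [SeminormedAddCommGroup E] {a : 𝔸} {F : ℕ → E} {R : ℝ}
    (hF : limsup (fun n ↦ (‖F n‖₊ : ℝ≥0∞) ^ (1 / (n : ℝ))) atTop ≤ ENNReal.ofReal (1 / R))
    (ha : spectralRadius ℂ a < ENNReal.ofReal R) :
    Summable fun n ↦ ‖a ^ n‖ * ‖F n‖ := by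
  obtain ⟨s, -, has, hsR⟩ := ENNReal.lt_iff_exists_real_btwn.mp ha
  obtain ⟨r, hr, har, hrs⟩ := ENNReal.lt_iff_exists_real_btwn.mp has
  obtain ⟨hrs, hs⟩ := ENNReal.ofReal_lt_ofReal_iff'.mp hrs
  have hsR : s < R := (ENNReal.ofReal_lt_ofReal_iff'.mp hsR).1
  have hpow : ∀ᶠ n in atTop, ‖a ^ n‖ ≤ r ^ n :=
    eventually_norm_le_pow_of_limsup_lt <|
      (spectrum.pow_nnnorm_pow_one_div_tendsto_nhds_spectralRadius a).limsup_eq ▸ har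
  have hcoef : ∀ᶠ n in atTop, ‖F n‖ ≤ (1 / s) ^ n :=
    eventually_norm_le_pow_of_limsup_lt <| hF.trans_lt <|
      (ENNReal.ofReal_lt_ofReal_iff (by positivity)).mpr (one_div_lt_one_div_of_lt hs hsR)
  refine .of_norm_bounded_eventually_nat (summable_geometric_of_lt_one (by positivity)
    ((div_lt_one hs).mpr hrs)) ?_
  filter_upwards [hpow, hcoef] with n hn hFn
  rw [Real.norm_of_nonneg (by positivity), div_eq_mul_one_div r s, mul_pow]
  exact mul_le_mul hn hFn (norm_nonneg _) (by positivity)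

theorem Summable.tsum_sum_antidiagonal {α A : Type*} [AddCommMonoid α] [TopologicalSpace α]
    [ContinuousAdd α] [T3Space α] [AddCommMonoid A] [HasAntidiagonal A] {f : A × A → α}
    (hf : Summable f) : ∑' n, ∑ kl ∈ antidiagonal n, f kl = ∑' kl, f kl := by
  rw [← HasAntidiagonal.sigmaAntidiagonalEquivProd.tsum_eq f, Summable.tsum_sigma' (f := fun c ↦ f (HasAntidiagonal.sigmaAntidiagonalEquivProd c))
    (fun n ↦ (hasSum_fintype _).summable)
      (HasAntidiagonal.sigmaAntidiagonalEquivProd.summable_iff.mpr hf)]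
  simp only [HasAntidiagonal.sigmaAntidiagonalEquivProd_apply, Finset.tsum_subtype]

theorem tsum_pow_mul_sum_range_mul_eq {𝔸 : Type*} [NormedRing 𝔸] [CompleteSpace 𝔸] (a : 𝔸)
    {F G : ℕ → 𝔸} (hF : Summable fun n ↦ ‖a ^ n‖ * ‖F n‖)
    (hG : Summable fun n ↦ ‖a ^ n‖ * ‖G n‖) :
    ∑' n, a ^ n * ∑ k ∈ range (n + 1), F k * G (n - k) =
      ∑' n, a ^ n * (∑' m, a ^ m * F m) * G n := by
  set f : ℕ × ℕ → 𝔸 := fun lk ↦ a ^ lk.1 * (a ^ lk.2 * F lk.2) * G lk.1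
  have hf : Summable f := by
    refine .of_norm_bounded (hG.mul_of_nonneg hF (fun _ ↦ by positivity) fun _ ↦ by positivity)
      fun lk ↦ ?_
    calc ‖f lk‖ ≤ ‖a ^ lk.1‖ * (‖a ^ lk.2‖ * ‖F lk.2‖) * ‖G lk.1‖ := by
          refine (norm_mul₃_le ..).trans ?_
          gcongr
          exact norm_mul_le _ _
      _ = ‖a ^ lk.1‖ * ‖G lk.1‖ * (‖a ^ lk.2‖ * ‖F lk.2‖) := by ring
  have hFa : Summable fun m ↦ a ^ m * F m :=
    .of_norm_bounded hF fun m ↦ norm_mul_le _ _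
  calc ∑' n, a ^ n * ∑ k ∈ range (n + 1), F k * G (n - k)
      = ∑' n, ∑ lk ∈ antidiagonal n, f lk := by
        refine tsum_congr fun n ↦ ?_
        rw [← Nat.sum_antidiagonal_swap, Nat.sum_antidiagonal_eq_sum_range_succ_mk, mul_sum]
        refine sum_congr rfl fun k hk ↦ ?_
        rw [← pow_sub_mul_pow a (Nat.lt_succ_iff.mp (mem_range.mp hk))]
        simp only [f, Prod.swap_prod_mk, mul_assoc]
    _ = ∑' lk, f lk := hf.tsum_sum_antidiagonal
    _ = ∑' l, ∑' k, f (l, k) := hf.tsum_prod' hf.prod_factor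
    _ = ∑' n, a ^ n * (∑' m, a ^ m * F m) * G n := by
        refine tsum_congr fun l ↦ ?_
        rw [← hFa.tsum_mul_left, ← (hFa.mul_left _).tsum_mul_right]

theorem tsum_pow_mul_sum_range_mul_eq_zero {𝔸 : Type*} [NormedRing 𝔸] [CompleteSpace 𝔸] (a : 𝔸)
    {F G : ℕ → 𝔸} (hF : Summable fun n ↦ ‖a ^ n‖ * ‖F n‖)
    (hG : Summable fun n ↦ ‖a ^ n‖ * ‖G n‖) (hFa : ∑' m, a ^ m * F m = 0) :
    ∑' n, a ^ n * ∑ k ∈ range (n + 1), F k * G (n - k) = 0 := by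
  simp [tsum_pow_mul_sum_range_mul_eq a hF hG, hFa]

theorem stmt4_general {p : ℕ} (R : ℝ)
    (F G : ℕ → Matrix (Fin p) (Fin p) ℂ)
    (hF : Filter.limsup (fun n => (‖F n‖₊ : ℝ≥0∞) ^ (1 / (n : ℝ))) Filter.atTop
      ≤ ENNReal.ofReal (1 / R))
    (hG : Filter.limsup (fun n => (‖G n‖₊ : ℝ≥0∞) ^ (1 / (n : ℝ))) Filter.atTop
      ≤ ENNReal.ofReal (1 / R))
    (A : Matrix (Fin p) (Fin p) ℂ)
    (hA : spectralRadius ℂ A < ENNReal.ofReal R) :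
    (∑' n : ℕ, A ^ n * ∑ k ∈ Finset.range (n + 1), F k * G (n - k)
        = ∑' n : ℕ, A ^ n * (∑' m : ℕ, A ^ m * F m) * G n) ∧
    ((∑' m : ℕ, A ^ m * F m) = 0 →
      ∑' n : ℕ, A ^ n * ∑ k ∈ Finset.range (n + 1), F k * G (n - k) = 0) := by
  have hF' := summable_norm_pow_mul_norm_of_spectralRadius_lt hF hA
  have hG' := summable_norm_pow_mul_norm_of_spectralRadius_lt hG hA
  exact ⟨tsum_pow_mul_sum_range_mul_eq A hF' hG', tsum_pow_mul_sum_range_mul_eq_zero A hF' hG'⟩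

/-- For matrix power series `F`, `G` of radius `≥ R` and `ρ(A) < R`, the Cauchy product
satisfies `(F ⋆ G)(A) = ∑ₙ Aⁿ F(A) Gₙ`; in particular `(F ⋆ G)(A) = 0` whenever `F(A) = 0`. -/
theorem stmt4 {p : ℕ} (R : ℝ) (hR : 0 < R)
    (F G : ℕ → Matrix (Fin p) (Fin p) ℂ)
    (hF : Filter.limsup (fun n => (‖F n‖₊ : ℝ≥0∞) ^ (1 / (n : ℝ))) Filter.atTop
      ≤ ENNReal.ofReal (1 / R))
    (hG : Filter.limsup (fun n => (‖G n‖₊ : ℝ≥0∞) ^ (1 / (n : ℝ))) Filter.atTop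
      ≤ ENNReal.ofReal (1 / R))
    (A : Matrix (Fin p) (Fin p) ℂ)
    (hA : spectralRadius ℂ A < ENNReal.ofReal R) :
    (∑' n : ℕ, A ^ n * ∑ k ∈ Finset.range (n + 1), F k * G (n - k)
        = ∑' n : ℕ, A ^ n * (∑' m : ℕ, A ^ m * F m) * G n) ∧
    ((∑' m : ℕ, A ^ m * F m) = 0 →
      ∑' n : ℕ, A ^ n * ∑ k ∈ Finset.range (n + 1), F k * G (n - k) = 0) :=
  stmt4_general R F G hF hG A hA
end

section
/- Let $A \in \mathbb{C}^{p\times p}$ with $\rho(A)<1$, $\Gamma_A = \sum_{n=0}^\infty A^nA^{*n}$, $L_A$ with $L_A^{-1} = A^*A + \Gamma_A^{-1}$, and define the coefficient sequence of the Blaschke factor $U_A$ by $U_0 = -A L_A^{1/2}$ and $U_n = A^{*(n-1)}\Gamma_A^{-1}L_A^{1/2}$ for $n \ge 1$. Then $\sum_{n=0}^\infty U_n^* U_n = I_p$, i.e., $L_A^{1/2}A^*AL_A^{1/2} + \sum_{j=0}^\infty L_A^{1/2}\Gamma_A^{-1}A^jA^{*j}\Gamma_A^{-1}L_A^{1/2}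 = I_p$. -/
/-!
By Gelfand's formula `‖Aⁿ‖` and `‖A*ⁿ‖` are eventually bounded by `rⁿ` for some `r < 1`, so the
series `Γ_A` converges. Its first term is `I` and the others are positive semidefinite, so `Γ_A`
is positive definite, hence so is `L_A⁻¹ = A*A + Γ_A⁻¹`. Summing the tail gives
`∑_{n ≥ 1} Uₙ*Uₙ = L_A^{1/2} Γ_A⁻¹ Γ_A Γ_A⁻¹ L_A^{1/2}`, so the whole sum is
`L_A^{1/2} (A*A + Γ_A⁻¹) L_A^{1/2} = L_A^{1/2} L_A⁻¹ L_A^{1/2} = I`.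
-/

open scoped ENNReal NNReal Matrix ComplexOrder

attribute [local instance] Matrix.linftyOpNormedRing Matrix.linftyOpNormedAlgebra

noncomputable def Matrix.PosSemidef.sqrt {n 𝕜 : Type*} [Fintype n] [RCLike 𝕜] [DecidableEq n]
    {A : Matrix n n 𝕜} (hA : A.PosSemidef) : Matrix n n 𝕜 :=
  hA.1.eigenvectorUnitary.1 * Matrix.diagonal ((↑) ∘ Real.sqrt ∘ hA.1.eigenvalues) *
    (star hA.1.eigenvectorUnitary : Matrix n n 𝕜)

open Filter

section BanachAlgebra

variable {A : Type*} [NormedRing A] [NormedAlgebra ℂ A]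

theorem spectralRadius_star [StarRing A] [StarModule ℂ A] (a : A) :
    spectralRadius ℂ (star a) = spectralRadius ℂ a := by
  simp only [spectralRadius, spectrum.map_star]
  refine le_antisymm (iSup₂_le fun k hk => ?_) (iSup₂_le fun k hk => ?_)
  · exact le_iSup₂_of_le (star k) hk (by simp)
  · exact le_iSup₂_of_le (star k) (by simpa using hk) (by simp)

variable [CompleteSpace A]

theorem exists_lt_one_eventually_nnnorm_pow_le {a : A} (ha : spectralRadius ℂ a < 1) :
    ∃ r : ℝ≥0, r < 1 ∧ ∀ᶠ n : ℕ in atTop, ‖a ^ n‖₊ ≤ r ^ n := by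
  obtain ⟨r, har, hr1⟩ := ENNReal.lt_iff_exists_nnreal_btwn.mp ha
  refine ⟨r, mod_cast hr1, ?_⟩
  filter_upwards [(spectrum.pow_nnnorm_pow_one_div_tendsto_nhds_spectralRadius a).eventually
    (gt_mem_nhds har), eventually_ne_atTop 0] with n hn hn0
  have hn' := ENNReal.rpow_le_rpow hn.le (Nat.cast_nonneg (α := ℝ) n)
  rw [← ENNReal.rpow_mul, one_div, inv_mul_cancel₀ (mod_cast hn0), ENNReal.rpow_one,
    ENNReal.rpow_natCast] at hn'
  exact_mod_cast hn'

theorem summable_pow_mul_pow_of_spectralRadius_lt_one {a b : A} (ha : spectralRadius ℂ a < 1)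
    (hb : spectralRadius ℂ b < 1) : Summable fun n : ℕ => a ^ n * b ^ n := by
  obtain ⟨r, hr, har⟩ := exists_lt_one_eventually_nnnorm_pow_le ha
  obtain ⟨s, hs, hbs⟩ := exists_lt_one_eventually_nnnorm_pow_le hb
  have hrs : r * s < 1 := mul_lt_one_of_nonneg_of_lt_one_left zero_le hr hs.le
  refine Summable.of_norm_bounded_eventually_nat
    (summable_geometric_of_lt_one (r * s).coe_nonneg (mod_cast hrs)) ?_
  filter_upwards [har, hbs] with n han hbn
  calc ‖a ^ n * b ^ n‖ ≤ ‖a ^ n‖ * ‖b ^ n‖ := norm_mul_le _ _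
    _ ≤ r ^ n * s ^ n := by gcongr <;> assumption
    _ = ((r * s : ℝ≥0) : ℝ) ^ n := by push_cast; ring

end BanachAlgebra

namespace Matrix

variable {n 𝕜 : Type*} [Fintype n] [RCLike 𝕜]

theorem PosDef.of_hasSum {ι : Type*} {f : ι → Matrix n n 𝕜} {M : Matrix n n 𝕜} (hf : HasSum f M)
    (hpsd : ∀ i, (f i).PosSemidef) (i₀ : ι) (hpd : (f i₀).PosDef) : M.PosDef := by
  refine .of_dotProduct_mulVec_pos ?_ fun x hx => ?_
  · exact hf.matrix_conjTranspose.unique (by simpa only [(hpsd _).isHermitian.eq] using hf)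
  · let q : Matrix n n 𝕜 →+ 𝕜 :=
      { toFun := fun N => star x ⬝ᵥ N *ᵥ x
        map_zero' := by simp
        map_add' := fun N N' => by simp [add_mulVec, dotProduct_add] }
    have hq : HasSum (fun i => star x ⬝ᵥ f i *ᵥ x) (star x ⬝ᵥ M *ᵥ x) :=
      hf.map q (continuous_const.dotProduct (continuous_id.matrix_mulVec continuous_const))
    rw [← hq.tsum_eq]
    exact hq.summable.tsum_pos (fun i => (hpsd i).dotProduct_mulVec_nonneg x) i₀
      (hpd.dotProduct_mulVec_pos hx)

variable [DecidableEq n]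

theorem posDef_of_hasSum_pow_mul_conjTranspose_pow {A Γ : Matrix n n 𝕜}
    (h : HasSum (fun k : ℕ => A ^ k * Aᴴ ^ k) Γ) : Γ.PosDef :=
  .of_hasSum h (fun k => by
      simpa [conjTranspose_pow] using posSemidef_self_mul_conjTranspose (A ^ k))
    0 (by simpa using PosDef.one)

section Sqrt

variable {M : Matrix n n 𝕜} (hM : M.PosSemidef)
include hM

theorem PosSemidef.sqrt_eq_conjStarAlgAut :
    hM.sqrt = Unitary.conjStarAlgAut 𝕜 _ hM.1.eigenvectorUnitary
      (diagonal ((↑) ∘ Real.sqrt ∘ hM.1.eigenvalues)) := rfl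

theorem PosSemidef.isHermitian_sqrt : hM.sqrt.IsHermitian := by
  rw [PosSemidef.sqrt_eq_conjStarAlgAut, Unitary.conjStarAlgAut_apply, star_eq_conjTranspose]
  exact isHermitian_mul_mul_conjTranspose _ (isHermitian_diagonal_of_self_adjoint _
    (funext fun i => by simp))

theorem PosSemidef.sqrt_mul_self : hM.sqrt * hM.sqrt = M := by
  rw [PosSemidef.sqrt_eq_conjStarAlgAut, ← map_mul, diagonal_mul_diagonal]
  conv_rhs => rw [hM.1.spectral_theorem]
  congr 2
  funext i
  simp [← RCLike.ofReal_mul, Real.mul_self_sqrt (hM.eigenvalues_nonneg i)]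

theorem PosSemidef.sqrt_mul_inv_mul_sqrt (h : IsUnit M.det) : hM.sqrt * M⁻¹ * hM.sqrt = 1 := by
  have hS := hM.sqrt_mul_self
  set S := hM.sqrt
  rw [← hS, det_mul, IsUnit.mul_iff, and_self] at h
  rw [← hS, mul_inv_rev, ← mul_assoc, mul_nonsing_inv _ h, one_mul, nonsing_inv_mul _ h]

end Sqrt

end Matrix

/-- The coefficients `U₀ = -A L_A^{1/2}`, `Uₙ = A*^{n-1} Γ_A⁻¹ L_A^{1/2}` (`n ≥ 1`) of the
Blaschke factor `U_A` satisfy `∑ₙ Uₙ* Uₙ = I`. -/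
theorem stmt8 {p : ℕ} (A : Matrix (Fin p) (Fin p) ℂ)
    (hA : spectralRadius ℂ A < 1)
    (Γ : Matrix (Fin p) (Fin p) ℂ) (hΓ : Γ = ∑' n : ℕ, A ^ n * Aᴴ ^ n)
    (L : Matrix (Fin p) (Fin p) ℂ) (hL : L⁻¹ = Aᴴ * A + Γ⁻¹)
    (hLpsd : L.PosSemidef)
    (U : ℕ → Matrix (Fin p) (Fin p) ℂ)
    (hU0 : U 0 = -(A * hLpsd.sqrt))
    (hUn : ∀ n : ℕ, 1 ≤ n → U n = Aᴴ ^ (n - 1) * Γ⁻¹ * hLpsd.sqrt) :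
    ∑' n : ℕ, (U n)ᴴ * U n = 1 := by
  have hΓsum : HasSum (fun n => A ^ n * Aᴴ ^ n) Γ := hΓ ▸ Summable.hasSum
    (summable_pow_mul_pow_of_spectralRadius_lt_one hA (spectralRadius_star A ▸ hA))
  have hΓpd : Γ.PosDef := Matrix.posDef_of_hasSum_pow_mul_conjTranspose_pow hΓsum
  have hLdet : IsUnit L.det := by
    rw [← Matrix.isUnit_nonsing_inv_det_iff, hL, ← Matrix.isUnit_iff_isUnit_det]
    exact (hΓpd.inv.posSemidef_add (Matrix.posSemidef_conjTranspose_mul_self A)).isUnit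
  set S := hLpsd.sqrt
  have hS : Sᴴ = S := hLpsd.isHermitian_sqrt
  have hΓinv : (Γ⁻¹)ᴴ = Γ⁻¹ := hΓpd.inv.isHermitian
  have hhead : (U 0)ᴴ * U 0 = S * (Aᴴ * A) * S := by
    rw [hU0, Matrix.conjTranspose_neg, Matrix.conjTranspose_mul, hS]
    noncomm_ring
  have hterm (n : ℕ) : (U (n + 1))ᴴ * U (n + 1) = S * Γ⁻¹ * (A ^ n * Aᴴ ^ n) * (Γ⁻¹ * S) := by
    rw [hUn (n + 1) (Nat.le_add_left 1 n), Nat.add_sub_cancel, Matrix.conjTranspose_mul,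
      Matrix.conjTranspose_mul, hS, hΓinv, Matrix.conjTranspose_pow,
      Matrix.conjTranspose_conjTranspose]
    simp only [mul_assoc]
  have htail : HasSum (fun n => (U (n + 1))ᴴ * U (n + 1)) (S * Γ⁻¹ * S) := by
    simpa only [hterm, mul_assoc, Matrix.nonsing_inv_mul_cancel_left _ _
      ((Matrix.isUnit_iff_isUnit_det Γ).mp hΓpd.isUnit)]
      using (hΓsum.mul_left (S * Γ⁻¹)).mul_right (Γ⁻¹ * S)
  rw [htail.zero_add.tsum_eq, hhead, ← hLpsd.sqrt_mul_inv_mul_sqrt hLdet, hL]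
  noncomm_ring
end

section
/- Let $\mathfrak{G}, \mathfrak{H}$ be Hilbert spaces and $T : \mathfrak{G} \to \mathfrak{H}$ a contraction. Then an element $f \in \mathfrak{H}$ lies in the range of $\sqrt{I_{\mathfrak{H}} - TT^*}$ if and only if $\sup_{g\in\mathfrak{G}}\big(\|f + Tg\|_{\mathfrak{H}}^2 - \|g\|_{\mathfrak{G}}^2\big) < \infty$. -/
/-!
Since `Q² + T T* = 1`, we have `‖Q w‖² + ‖T* w‖² = ‖w‖²` for every `w`, i.e. the adjoint of the
row operator `(k, g) ↦ Q k + T g` is an isometry. Hence that row operator is a contraction, and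
for `f = Q k` the supremum is at most `‖k‖²`.

Conversely, if the supremum is `c`, test it against `g = t · conj ⟪f, h⟫ · T* h` for `t ≥ 0`:
Cauchy–Schwarz against `h` and optimisation in `t` give `|⟪f, h⟫|² ≤ c ‖Q h‖²`. Thus
`Q h ↦ ⟪f, h⟫` is a well-defined bounded functional on the range of `Q`; a Hahn–Banach extension
of it is represented by some `k`, and then `⟪Q k, h⟫ = ⟪k, Q h⟫ = ⟪f, h⟫` for all `h`.
-/

theorem le_mul_of_forall_quadratic_le {A β q c : ℝ} (hβ : 0 ≤ β) (hq : 0 ≤ q)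
    (h : ∀ t : ℝ, 0 ≤ t → A * (1 + t * β) ^ 2 ≤ (c + t ^ 2 * A * β) * (q + β)) :
    A ≤ c * q := by
  rcases hq.eq_or_lt with rfl | hq
  · have h' : ∀ t : ℝ, 0 ≤ t → A + 2 * t * A * β ≤ c * β := fun t ht => by nlinarith [h t ht]
    by_contra! hpos
    rw [mul_zero] at hpos
    have ht : 2 * (|c| / (2 * A)) * A = |c| := by field_simp
    nlinarith [h' _ (by positivity : 0 ≤ |c| / (2 * A)), le_abs_self c]
  · have := h q⁻¹ (by positivity)
    field_simp at this
    nlinarith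

namespace ContinuousLinearMap

open InnerProductSpace RCLike
open scoped InnerProductSpace ComplexConjugate

variable {𝕜 E F G : Type*} [RCLike 𝕜]
  [NormedAddCommGroup E] [InnerProductSpace 𝕜 E] [CompleteSpace E]
  [NormedAddCommGroup F] [InnerProductSpace 𝕜 F] [CompleteSpace F]
  [NormedAddCommGroup G] [InnerProductSpace 𝕜 G] [CompleteSpace G]

theorem mem_range_adjoint_of_norm_inner_le (A : E →L[𝕜] F) {f : E} {C : ℝ}
    (h : ∀ x, ‖⟪f, x⟫_𝕜‖ ≤ C * ‖A x‖) : f ∈ Set.range (adjoint A) := by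
  have hker : LinearMap.ker (A : E →ₗ[𝕜] F) ≤ LinearMap.ker (innerₛₗ 𝕜 f) := fun x hx => by
    simpa [show A x = 0 from hx] using h x
  let φ : LinearMap.range (A : E →ₗ[𝕜] F) →ₗ[𝕜] 𝕜 :=
    (LinearMap.ker (A : E →ₗ[𝕜] F)).liftQ (innerₛₗ 𝕜 f) hker ∘ₗ
      (A : E →ₗ[𝕜] F).quotKerEquivRange.symm
  have hφ : ∀ x, φ ⟨A x, x, rfl⟩ = ⟪f, x⟫_𝕜 := fun x => by
    simp only [φ, LinearMap.comp_apply, LinearEquiv.coe_coe]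
    exact congrArg _ ((A : E →ₗ[𝕜] F).quotKerEquivRange_symm_apply_image x _)
  obtain ⟨Φ, hΦ, -⟩ := exists_extension_norm_eq _ <| φ.mkContinuous C <| by
    rintro ⟨_, x, rfl⟩
    simpa [hφ] using h x
  refine ⟨(toDual 𝕜 F).symm Φ, ext_inner_right 𝕜 fun x => ?_⟩
  rw [adjoint_inner_left, toDual_symm_apply, ← hφ x]
  exact hΦ ⟨A x, x, rfl⟩

theorem norm_apply_add_apply_sq_le (A : E →L[𝕜] F) (B : G →L[𝕜] F)
    (hAB : ∀ w, ‖adjoint A w‖ ^ 2 + ‖adjoint B w‖ ^ 2 ≤ ‖w‖ ^ 2) (k : E) (g : G) :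
    ‖A k + B g‖ ^ 2 ≤ ‖k‖ ^ 2 + ‖g‖ ^ 2 := by
  set w := A k + B g
  have hw : ‖w‖ ^ 2 ≤ ‖adjoint A w‖ * ‖k‖ + ‖adjoint B w‖ * ‖g‖ :=
    calc ‖w‖ ^ 2 = re ⟪w, A k + B g⟫_𝕜 := (inner_self_eq_norm_sq w).symm
      _ = re ⟪adjoint A w, k⟫_𝕜 + re ⟪adjoint B w, g⟫_𝕜 := by
        rw [inner_add_right, map_add, adjoint_inner_left, adjoint_inner_left]
      _ ≤ _ := add_le_add (re_inner_le_norm _ _) (re_inner_le_norm _ _)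
  nlinarith [hAB w, sq_nonneg (‖adjoint A w‖ * ‖g‖ - ‖adjoint B w‖ * ‖k‖), norm_nonneg w,
    norm_nonneg (adjoint A w), norm_nonneg (adjoint B w), norm_nonneg k, norm_nonneg g]

theorem norm_inner_sq_le_of_forall_norm_add_sq_sub_le (T : G →L[𝕜] F)
    (hT : ‖T‖ ≤ 1) {f : F} {c : ℝ} (hc : ∀ g, ‖f + T g‖ ^ 2 - ‖g‖ ^ 2 ≤ c) (h : F) :
    ‖⟪f, h⟫_𝕜‖ ^ 2 ≤ c * (‖h‖ ^ 2 - ‖adjoint T h‖ ^ 2) := by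
  set a := ⟪f, h⟫_𝕜
  set β := ‖adjoint T h‖ ^ 2
  have hβ : β ≤ ‖h‖ ^ 2 := by
    have := (adjoint T).le_of_opNorm_le (c := 1) (by rwa [LinearIsometryEquiv.norm_map]) h
    rw [one_mul] at this
    exact pow_le_pow_left₀ (norm_nonneg _) this 2
  refine le_mul_of_forall_quadratic_le (β := β) (sq_nonneg _) (sub_nonneg.2 hβ)
    fun t ht => ?_
  set g := ((t : 𝕜) * conj a) • adjoint T h
  have hg : ‖g‖ ^ 2 = t ^ 2 * ‖a‖ ^ 2 * β := by
    simp only [g, β, norm_smul, norm_mul, RCLike.norm_conj, norm_ofReal, abs_of_nonneg ht]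
    ring
  have hinner : ⟪f + T g, h⟫_𝕜 = a * (1 + t * β : ℝ) := by
    rw [inner_add_left, ← adjoint_inner_right, inner_smul_left, inner_self_eq_norm_sq_to_K]
    simp only [β, map_mul, conj_conj, conj_ofReal]
    push_cast
    ring
  calc ‖a‖ ^ 2 * (1 + t * β) ^ 2 = ‖⟪f + T g, h⟫_𝕜‖ ^ 2 := by
        rw [hinner, norm_mul, norm_ofReal, abs_of_nonneg (by positivity), mul_pow]
    _ ≤ ‖f + T g‖ ^ 2 * ‖h‖ ^ 2 := by
        rw [← mul_pow]; gcongr; exact norm_inner_le_norm _ _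
    _ ≤ (c + t ^ 2 * ‖a‖ ^ 2 * β) * ‖h‖ ^ 2 := by
        gcongr; linarith [hc g]
    _ = _ := by ring

theorem norm_sq_eq_of_comp_self_eq {T : G →L[𝕜] F} {Q : F →L[𝕜] F}
    (hQ : IsSelfAdjoint Q) (hQT : Q ∘L Q = 1 - T ∘L adjoint T) (w : F) :
    ‖Q w‖ ^ 2 = ‖w‖ ^ 2 - ‖adjoint T w‖ ^ 2 := by
  have hQQ : Q (Q w) = w - T (adjoint T w) := by simpa using DFunLike.congr_fun hQT w
  have := congrArg (fun v => re ⟪v, w⟫_𝕜) hQQ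
  simp only [inner_sub_left, map_sub] at this
  rwa [← adjoint_inner_right Q, hQ.adjoint_eq, ← adjoint_inner_right T, inner_self_eq_norm_sq,
    inner_self_eq_norm_sq, inner_self_eq_norm_sq] at this

end ContinuousLinearMap

/-- Fillmore–Williams / de Branges–Rovnyak: for a contraction `T : 𝔊 → ℌ` between Hilbert
spaces, with `Q` the positive square root of `I - T T*`, an element `f ∈ ℌ` lies in the
range of `Q = √(I - T T*)` iff `sup_g (‖f + T g‖² - ‖g‖²) < ∞`. -/
theorem stmt18 {𝔊 ℌ : Type*}
    [NormedAddCommGroup 𝔊] [InnerProductSpace ℂ 𝔊] [CompleteSpace 𝔊]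
    [NormedAddCommGroup ℌ] [InnerProductSpace ℂ ℌ] [CompleteSpace ℌ]
    (T : 𝔊 →L[ℂ] ℌ) (hT : ‖T‖ ≤ 1)
    (Q : ℌ →L[ℂ] ℌ) (hQpos : Q.IsPositive)
    (hQ : Q ∘L Q = 1 - T ∘L T.adjoint) (f : ℌ) :
    f ∈ Set.range Q ↔
      BddAbove (Set.range fun g : 𝔊 => ‖f + T g‖ ^ 2 - ‖g‖ ^ 2) := by
  have hQsa := hQpos.isSelfAdjoint
  have hQnorm := ContinuousLinearMap.norm_sq_eq_of_comp_self_eq hQsa hQ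
  constructor
  · rintro ⟨k, rfl⟩
    refine ⟨‖k‖ ^ 2, Set.forall_mem_range.2 fun g => ?_⟩
    have := Q.norm_apply_add_apply_sq_le T
      (fun w => by rw [hQsa.adjoint_eq, hQnorm, sub_add_cancel]) k g
    linarith
  · rintro ⟨c, hc⟩
    replace hc : ∀ g, ‖f + T g‖ ^ 2 - ‖g‖ ^ 2 ≤ c := Set.forall_mem_range.1 hc
    have hc0 : 0 ≤ c := (sq_nonneg ‖f‖).trans (by simpa using hc 0)
    rw [← hQsa.adjoint_eq]
    refine Q.mem_range_adjoint_of_norm_inner_le (C := √c) fun h => ?_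
    have hsq := T.norm_inner_sq_le_of_forall_norm_add_sq_sub_le hT hc h
    rw [← hQnorm] at hsq
    rw [← pow_le_pow_iff_left₀ (norm_nonneg _) (by positivity) two_ne_zero, mul_pow,
      Real.sq_sqrt hc0]
    exact hsq
end
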